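/- arXiv:2604.01169 — 5 statements merged into one kernel-verified Lean document; each statement's English description precedes it below -/
import Mathlib

section
/- Let X be a compact metric space, μ_base a Borel probability measure on X with full support, ν a Borel probability measure on X with D_KL(ν‖μ_base) < ∞, o_i : X → ℝ^{k_i} continuous maps for i = 1,…,m, and β > 0. If (μ*, (f_i*)) is a saddle point of the Lagrangian L with parameter β, then β · Σ_{i=1}^m d_{o_i}(μ*, ν) ≤ D_KL(ν‖μ_base); in particular, for each i, d_{o_i}(μ*, ν) ≤ D_KL(ν‖μ_base)/β. -/
open MeasureTheory Filter
open scoped ENNReal NNReal Classical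

/-- Kullback–Leibler divergence: `∫ log (dμ/dρ) dμ` when `μ ≪ ρ` and the integral is
finite (i.e. the integrand is integrable), and `+∞` otherwise. -/
noncomputable def klDiv {X : Type*} [MeasurableSpace X] (μ ρ : Measure X) : ℝ≥0∞ :=
  if μ ≪ ρ ∧ Integrable (fun x => Real.log (μ.rnDeriv ρ x).toReal) μ
  then ENNReal.ofReal (∫ x, Real.log (μ.rnDeriv ρ x).toReal ∂μ)
  else ⊤

/-- The observable Wasserstein distance
`d_o(μ, ν) = sup { ∫ f d(o_#μ) - ∫ f d(o_#ν) : f 1-Lipschitz }`. -/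
noncomputable def obsW {X O : Type*} [MeasurableSpace X] [MeasurableSpace O]
    [PseudoEMetricSpace O] (o : X → O) (μ ν : Measure X) : ℝ :=
  sSup {r : ℝ | ∃ f : O → ℝ, LipschitzWith 1 f ∧
    r = ∫ y, f y ∂(μ.map o) - ∫ y, f y ∂(ν.map o)}

/-- The Lagrangian `L(μ, (fᵢ)) = -D_KL(μ‖μ_base) + β ∑ᵢ (∫ fᵢ d((oᵢ)_#μ) - ∫ fᵢ d((oᵢ)_#ν))`,
with values in `[-∞, ∞)` (viewed inside `EReal`). -/
noncomputable def Lagrangian {X : Type*} [MeasurableSpace X] {m : ℕ} {k : Fin m → ℕ}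
    (β : ℝ) (μbase ν : Measure X)
    (o : ∀ i : Fin m, X → EuclideanSpace ℝ (Fin (k i)))
    (μ : Measure X) (f : ∀ i : Fin m, EuclideanSpace ℝ (Fin (k i)) → ℝ) : EReal :=
  ((β * ∑ i, (∫ y, f i y ∂(μ.map (o i)) - ∫ y, f i y ∂(ν.map (o i))) : ℝ) : EReal)
    - (klDiv μ μbase : EReal)

/-- `(μs, fs)` is a saddle point of the Lagrangian: `μs` is a Borel probability measure,
each `fs i` is 1-Lipschitz, and
`L(μ, fs) ≤ L(μs, fs) ≤ L(μs, f)` for all probability measures `μ` and all tuples `f`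
of 1-Lipschitz functions. -/
def IsSaddlePoint {X : Type*} [MeasurableSpace X] {m : ℕ} {k : Fin m → ℕ}
    (β : ℝ) (μbase ν : Measure X)
    (o : ∀ i : Fin m, X → EuclideanSpace ℝ (Fin (k i)))
    (μs : Measure X) (fs : ∀ i : Fin m, EuclideanSpace ℝ (Fin (k i)) → ℝ) : Prop :=
  IsProbabilityMeasure μs ∧ (∀ i, LipschitzWith 1 (fs i)) ∧
  (∀ μ : Measure X, IsProbabilityMeasure μ →
    Lagrangian β μbase ν o μ fs ≤ Lagrangian β μbase ν o μs fs) ∧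
  (∀ f : ∀ i : Fin m, EuclideanSpace ℝ (Fin (k i)) → ℝ, (∀ i, LipschitzWith 1 (f i)) →
    Lagrangian β μbase ν o μs fs ≤ Lagrangian β μbase ν o μs f)

lemma ennreal_coe_ereal_eq (x : ℝ≥0∞) (hx : x ≠ ⊤) : ((x.toReal : ℝ) : EReal) = (x : EReal) := by
  rw [← EReal.toReal_coe_ennreal (x := x)]
  exact EReal.coe_toReal (by simpa using hx) (by simp)

/-- **Saddle points nearly satisfy the observable constraints.** If `D_KL(ν‖μ_base) < ∞`
and `(μ*, (fᵢ*))` is a saddle point of the Lagrangian with parameter `β > 0`, then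
`β · ∑ᵢ d_{oᵢ}(μ*, ν) ≤ D_KL(ν‖μ_base)`, and in particular
`d_{oᵢ}(μ*, ν) ≤ D_KL(ν‖μ_base)/β` for each `i`. -/
theorem saddle_point_observable_bound
    {X : Type*} [MetricSpace X] [CompactSpace X] [MeasurableSpace X] [BorelSpace X]
    {m : ℕ} {k : Fin m → ℕ}
    (μbase ν : Measure X) [IsProbabilityMeasure μbase] [IsProbabilityMeasure ν]
    [μbase.IsOpenPosMeasure]
    (hKL : klDiv ν μbase < ⊤)
    (o : ∀ i : Fin m, X → EuclideanSpace ℝ (Fin (k i)))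
    (ho : ∀ i, Continuous (o i))
    (β : ℝ) (hβ : 0 < β)
    (μs : Measure X) (fs : ∀ i : Fin m, EuclideanSpace ℝ (Fin (k i)) → ℝ)
    (hsaddle : IsSaddlePoint β μbase ν o μs fs) :
    β * ∑ i, obsW (o i) μs ν ≤ (klDiv ν μbase).toReal ∧
    ∀ i, obsW (o i) μs ν ≤ (klDiv ν μbase).toReal / β := by
  obtain ⟨hμs, hfs, hmax, hmin⟩ := hsaddle
  set D : Fin m → ℝ := fun i => ∫ y, fs i y ∂(μs.map (o i)) - ∫ y, fs i y ∂(ν.map (o i)) with hD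
  have hKν : klDiv ν μbase ≠ ⊤ := hKL.ne
  have h1 : ((0 : ℝ) : EReal) - (klDiv ν μbase : EReal)
      ≤ ((β * ∑ i, D i : ℝ) : EReal) - (klDiv μs μbase : EReal) := by
    have h := hmax ν inferInstance
    simp only [Lagrangian, sub_self, Finset.sum_const_zero, mul_zero] at h
    exact h
  have hKs : klDiv μs μbase ≠ ⊤ := by
    intro h
    rw [h, EReal.coe_ennreal_top, EReal.sub_top, le_bot_iff,
      ← ennreal_coe_ereal_eq _ hKν, ← EReal.coe_sub] at h1
    exact EReal.coe_ne_bot _ h1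
  have h1' : -(klDiv ν μbase).toReal ≤ β * ∑ i, D i - (klDiv μs μbase).toReal := by
    rw [← ennreal_coe_ereal_eq _ hKν, ← ennreal_coe_ereal_eq _ hKs, ← EReal.coe_sub,
      ← EReal.coe_sub, EReal.coe_le_coe_iff] at h1
    linarith
  have key : ∀ i, ∀ f : EuclideanSpace ℝ (Fin (k i)) → ℝ, LipschitzWith 1 f →
      (∫ y, f y ∂(μs.map (o i)) - ∫ y, f y ∂(ν.map (o i))) ≤ -D i := by
    intro i f hf
    have hlip : ∀ j, LipschitzWith 1 (Function.update fs i (-f) j) := by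
      intro j
      rcases eq_or_ne j i with rfl | hj
      · simpa using hf.neg
      · rw [Function.update_of_ne hj]; exact hfs j
    have hup := hmin (Function.update fs i (-f)) hlip
    simp only [Lagrangian] at hup
    rw [← ennreal_coe_ereal_eq _ hKs, ← EReal.coe_sub, ← EReal.coe_sub,
      EReal.coe_le_coe_iff] at hup
    have hsum : ∑ j, (∫ y, Function.update fs i (-f) j y ∂(μs.map (o j))
          - ∫ y, Function.update fs i (-f) j y ∂(ν.map (o j)))
        = (∑ j, D j) - D i
          + (-(∫ y, f y ∂(μs.map (o i))) - -(∫ y, f y ∂(ν.map (o i)))) := by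
      rw [← Finset.sum_erase_add _ _ (Finset.mem_univ i),
        ← Finset.sum_erase_add Finset.univ D (Finset.mem_univ i)]
      have h2 : ∀ j ∈ Finset.univ.erase i,
          (∫ y, Function.update fs i (-f) j y ∂(μs.map (o j))
            - ∫ y, Function.update fs i (-f) j y ∂(ν.map (o j))) = D j := by
        intro j hj
        rw [Function.update_of_ne (Finset.ne_of_mem_erase hj)]
      rw [Finset.sum_congr rfl h2, Function.update_self]
      have hneg1 : ∫ y, (-f) y ∂(μs.map (o i)) = -(∫ y, f y ∂(μs.map (o i))) := by
        simp [integral_neg]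
      have hneg2 : ∫ y, (-f) y ∂(ν.map (o i)) = -(∫ y, f y ∂(ν.map (o i))) := by
        simp [integral_neg]
      rw [hneg1, hneg2]; ring
    rw [hsum] at hup
    nlinarith [hup]
  have hne : ∀ i, (0 : ℝ) ∈ {r : ℝ | ∃ f : EuclideanSpace ℝ (Fin (k i)) → ℝ,
      LipschitzWith 1 f ∧ r = ∫ y, f y ∂(μs.map (o i)) - ∫ y, f y ∂(ν.map (o i))} :=
    fun i => ⟨fun _ => 0, LipschitzWith.const' 0, by simp⟩
  have hub : ∀ i, -D i ∈ upperBounds {r : ℝ | ∃ f : EuclideanSpace ℝ (Fin (k i)) → ℝ,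
      LipschitzWith 1 f ∧ r = ∫ y, f y ∂(μs.map (o i)) - ∫ y, f y ∂(ν.map (o i))} := by
    rintro i r ⟨f, hf, rfl⟩
    exact key i f hf
  have hbdd : ∀ i, obsW (o i) μs ν ≤ -D i := fun i => csSup_le ⟨0, hne i⟩ (hub i)
  have hnn : ∀ i, 0 ≤ obsW (o i) μs ν := fun i => le_csSup ⟨-D i, hub i⟩ (hne i)
  have hmain : β * ∑ i, obsW (o i) μs ν ≤ (klDiv ν μbase).toReal := by
    have hs : ∑ i, obsW (o i) μs ν ≤ ∑ i, -D i := Finset.sum_le_sum (fun i _ => hbdd i)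
    have : ∑ i, -D i = -∑ i, D i := by rw [Finset.sum_neg_distrib]
    have hKsnn : (0 : ℝ) ≤ (klDiv μs μbase).toReal := ENNReal.toReal_nonneg
    nlinarith [hs, h1']
  refine ⟨hmain, fun i => ?_⟩
  rw [le_div_iff₀ hβ]
  have hle : obsW (o i) μs ν ≤ ∑ j, obsW (o j) μs ν :=
    Finset.single_le_sum (fun j _ => hnn j) (Finset.mem_univ i)
  nlinarith [hle, hmain]
end

section
/- Let X be a compact metric space, μ_base a Borel probability measure on X with full support, ν a Borel probability measure on X with D_KL(ν‖μ_base) < ∞, and o_i : X → ℝ^{k_i} continuous maps for i = 1,…,m. For each β > 0, let μ*_β denote the (unique) μ-component of a saddle point of the Lagrangian L with parameter β. Then, as β → ∞, d_{o_i}(μ*_β, ν) → 0 for every i = 1,…,m. -/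
open MeasureTheory Filter
open scoped ENNReal NNReal Classical

/-!
Test the saddle inequalities `L(ν, fs) ≤ L(μ*, fs) ≤ L(μ*, -g)` at the reference measure `ν` and
at reflected potentials `-g`. Since `L(ν, ·) = -D_KL(ν‖μ_base)`, this gives
`β ∑ᵢ (∫ gᵢ d(oᵢ)_#μ* - ∫ gᵢ d(oᵢ)_#ν) ≤ D_KL(ν‖μ_base) - D_KL(μ*‖μ_base) ≤ D_KL(ν‖μ_base)`
for every tuple of 1-Lipschitz `g`. Choosing `g` supported on a single observable yields
`d_{oᵢ}(μ*_β, ν) ≤ D_KL(ν‖μ_base) / β`.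
-/

section ObsW

variable {X O : Type*} [MeasurableSpace X] [MeasurableSpace O] [PseudoEMetricSpace O]

/-- No boundedness is needed: `sSup` of a set of reals unbounded above is `0`. -/
theorem obsW_nonneg (o : X → O) (μ ν : Measure X) : 0 ≤ obsW o μ ν :=
  Real.sSup_nonneg' ⟨0, ⟨0, LipschitzWith.const' 0, by simp⟩, le_rfl⟩

theorem obsW_le_of_forall_le {o : X → O} {μ ν : Measure X} {c : ℝ}
    (h : ∀ f : O → ℝ, LipschitzWith 1 f →
      ∫ y, f y ∂(μ.map o) - ∫ y, f y ∂(ν.map o) ≤ c) :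
    obsW o μ ν ≤ c :=
  csSup_le ⟨0, 0, LipschitzWith.const' 0, by simp⟩ <| by
    rintro r ⟨f, hf, rfl⟩
    exact h f hf

end ObsW

section Lagrangian

variable {X : Type*} [MeasurableSpace X] {m : ℕ} {k : Fin m → ℕ} {β : ℝ}
  {μbase ν μ : Measure X} {o : ∀ i : Fin m, X → EuclideanSpace ℝ (Fin (k i))}

theorem Lagrangian_eq_coe (hμ : klDiv μ μbase ≠ ⊤)
    (f : ∀ i : Fin m, EuclideanSpace ℝ (Fin (k i)) → ℝ) :
    Lagrangian β μbase ν o μ f =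
      ((β * ∑ i, (∫ y, f i y ∂(μ.map (o i)) - ∫ y, f i y ∂(ν.map (o i)))
        - (klDiv μ μbase).toReal : ℝ) : EReal) := by
  rw [Lagrangian, EReal.coe_sub, ← EReal.coe_ennreal_toReal hμ]

theorem Lagrangian_eq_bot (hμ : klDiv μ μbase = ⊤)
    (f : ∀ i : Fin m, EuclideanSpace ℝ (Fin (k i)) → ℝ) :
    Lagrangian β μbase ν o μ f = ⊥ := by
  rw [Lagrangian, hμ, EReal.coe_ennreal_top, EReal.sub_top]

theorem Lagrangian_self (f : ∀ i : Fin m, EuclideanSpace ℝ (Fin (k i)) → ℝ) :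
    Lagrangian β μbase ν o ν f = -(klDiv ν μbase : EReal) := by
  simp [Lagrangian]

end Lagrangian

namespace IsSaddlePoint

variable {X : Type*} [MeasurableSpace X] {m : ℕ} {k : Fin m → ℕ} {β : ℝ}
  {μbase ν μs : Measure X} [IsProbabilityMeasure ν]
  {o : ∀ i : Fin m, X → EuclideanSpace ℝ (Fin (k i))}
  {fs : ∀ i : Fin m, EuclideanSpace ℝ (Fin (k i)) → ℝ}

theorem klDiv_ne_top (hs : IsSaddlePoint β μbase ν o μs fs) (hν : klDiv ν μbase ≠ ⊤) :
    klDiv μs μbase ≠ ⊤ := by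
  obtain ⟨-, -, hmax, -⟩ := hs
  intro hμs
  have h := hmax ν inferInstance
  rw [Lagrangian_self, Lagrangian_eq_bot hμs, le_bot_iff, EReal.neg_eq_bot_iff,
    EReal.coe_ennreal_eq_top_iff] at h
  exact hν h

theorem mul_sum_le (hs : IsSaddlePoint β μbase ν o μs fs) (hν : klDiv ν μbase ≠ ⊤)
    {g : ∀ i : Fin m, EuclideanSpace ℝ (Fin (k i)) → ℝ} (hg : ∀ i, LipschitzWith 1 (g i)) :
    β * ∑ i, (∫ y, g i y ∂(μs.map (o i)) - ∫ y, g i y ∂(ν.map (o i)))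
      ≤ (klDiv ν μbase).toReal := by
  have hμs := hs.klDiv_ne_top hν
  obtain ⟨-, -, hmax, hmin⟩ := hs
  have hlow := hmax ν inferInstance
  have hup := hmin (fun i => -g i) fun i => (hg i).neg
  rw [Lagrangian_self, ← EReal.coe_ennreal_toReal hν, Lagrangian_eq_coe hμs] at hlow
  rw [Lagrangian_eq_coe hμs, Lagrangian_eq_coe hμs] at hup
  have hlow' := EReal.coe_le_coe_iff.mp hlow
  have hup' := EReal.coe_le_coe_iff.mp hup
  simp only [Pi.neg_apply, integral_neg, neg_sub_neg, Finset.sum_sub_distrib, mul_sub]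
    at hlow' hup' ⊢
  linarith [ENNReal.toReal_nonneg (a := klDiv μs μbase)]

theorem obsW_le (hs : IsSaddlePoint β μbase ν o μs fs) (hν : klDiv ν μbase ≠ ⊤) (hβ : 0 < β)
    (i : Fin m) : obsW (o i) μs ν ≤ (klDiv ν μbase).toReal / β := by
  refine obsW_le_of_forall_le fun g hg => (le_div_iff₀' hβ).2 ?_
  let single := Pi.single (M := fun j => EuclideanSpace ℝ (Fin (k j)) → ℝ) i g
  have hsingle : ∀ j, LipschitzWith 1 (single j) := by
    intro j
    rcases eq_or_ne j i with rfl | hj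
    · simpa [single] using hg
    · simp only [single, Pi.single_eq_of_ne hj]
      exact LipschitzWith.const' 0
  have hsum : ∀ μ : Measure X,
      ∑ j, ∫ y, single j y ∂(μ.map (o j)) = ∫ y, g y ∂(μ.map (o i)) := fun μ =>
    (Fintype.sum_eq_single i fun j hj => by simp [single, Pi.single_eq_of_ne hj]).trans
      (by simp [single])
  simpa [Finset.sum_sub_distrib, hsum] using hs.mul_sum_le hν hsingle

end IsSaddlePoint

theorem saddle_point_obsW_tendsto_zero_general
    {X : Type*} [MeasurableSpace X]
    {m : ℕ} {k : Fin m → ℕ}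
    (μbase ν : Measure X) [IsProbabilityMeasure ν]
    (hKL : klDiv ν μbase < ⊤)
    (o : ∀ i : Fin m, X → EuclideanSpace ℝ (Fin (k i)))
    (μstar : ℝ → Measure X)
    (hsaddle : ∀ β : ℝ, 0 < β →
      ∃ fs : ∀ i : Fin m, EuclideanSpace ℝ (Fin (k i)) → ℝ,
        IsSaddlePoint β μbase ν o (μstar β) fs) :
    ∀ i : Fin m, Tendsto (fun β : ℝ => obsW (o i) (μstar β) ν) atTop (nhds 0) := by
  intro i
  have hbound : ∀ᶠ β in atTop, obsW (o i) (μstar β) ν ≤ (klDiv ν μbase).toReal / β := by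
    filter_upwards [eventually_gt_atTop 0] with β hβ
    obtain ⟨fs, hs⟩ := hsaddle β hβ
    exact hs.obsW_le hKL.ne hβ i
  exact tendsto_of_tendsto_of_tendsto_of_le_of_le' tendsto_const_nhds
    (tendsto_const_nhds.div_atTop tendsto_id) (.of_forall fun β => obsW_nonneg _ _ _) hbound

/-- **Asymptotic convergence in observable Wasserstein distance.** If
`D_KL(ν‖μ_base) < ∞` and, for each `β > 0`, `μ* β` is the `μ`-component of a saddle
point of the Lagrangian with parameter `β`, then `d_{oᵢ}(μ* β, ν) → 0` as `β → ∞`,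
for every observable `i`. -/
theorem saddle_point_obsW_tendsto_zero
    {X : Type*} [MetricSpace X] [CompactSpace X] [MeasurableSpace X] [BorelSpace X]
    {m : ℕ} {k : Fin m → ℕ}
    (μbase ν : Measure X) [IsProbabilityMeasure μbase] [IsProbabilityMeasure ν]
    [μbase.IsOpenPosMeasure]
    (hKL : klDiv ν μbase < ⊤)
    (o : ∀ i : Fin m, X → EuclideanSpace ℝ (Fin (k i)))
    (ho : ∀ i, Continuous (o i))
    (μstar : ℝ → Measure X)
    (hsaddle : ∀ β : ℝ, 0 < β →
      ∃ fs : ∀ i : Fin m, EuclideanSpace ℝ (Fin (k i)) → ℝ,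
        IsSaddlePoint β μbase ν o (μstar β) fs) :
    ∀ i : Fin m, Tendsto (fun β : ℝ => obsW (o i) (μstar β) ν) atTop (nhds 0) :=
  saddle_point_obsW_tendsto_zero_general μbase ν hKL o μstar hsaddle
end

section
/- Let X and O be standard Borel spaces, o : X → O a measurable map, and μ_base, ν Borel probability measures on X such that o_#ν is absolutely continuous with respect to o_#μ_base and D_KL(o_#ν‖o_#μ_base) < ∞. Let μ* be the tilted measure defined by dμ* = (w ∘ o) dμ_base with w = d(o_#ν)/d(o_#μ_base). Then: (1) for every Borel probability measure μ on X with o_#μ = o_#ν, one has D_KL(μ‖μ_base) ≥ D_KL(o_#ν‖o_#μ_base); (2) D_KL(μ*‖μ_base) = D_KL(o_#ν‖o_#μ_base); hence μ* minimizes D_KL(·‖μ_base) over the set {μ : o_#μ = o_#ν} of Borel probability measures satisfying the observable constraint. -/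
open MeasureTheory
open scoped ENNReal Classical

/-- The tilted measure `μ*` defined by `dμ* = (w ∘ o) dμ_base`, where
`w = d(o_#ν)/d(o_#μ_base)` is the Radon–Nikodym derivative. -/
noncomputable def tilted {X O : Type*} [MeasurableSpace X] [MeasurableSpace O]
    (o : X → O) (μbase ν : Measure X) : Measure X :=
  μbase.withDensity (fun x => (ν.map o).rnDeriv (μbase.map o) (o x))

/-!
Part (1) is the data-processing inequality for the Kullback–Leibler divergence under `o`.
For part (2), `μ*` has density `w ∘ o` with respect to `μ_base`, so writing the divergence as
`∫ klFun (dμ*/dμ_base) dμ_base` with `klFun t = t log t + 1 - t`, a change of variables along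
`o` turns it into `∫ klFun w d(o_#μ_base) = D_KL(o_#ν‖o_#μ_base)`. Both facts are available
for Mathlib's `InformationTheory.klDiv`, which agrees with `klDiv` on probability measures.
-/

section KLDiv

variable {X : Type*} [MeasurableSpace X]

lemma absolutelyContinuous_of_klDiv_lt_top {μ ρ : Measure X} (h : klDiv μ ρ < ⊤) : μ ≪ ρ := by
  by_contra hac
  simp [klDiv, hac] at h

lemma klDiv_eq_informationTheory_klDiv (μ ρ : Measure X) [IsProbabilityMeasure μ]
    [IsProbabilityMeasure ρ] : klDiv μ ρ = InformationTheory.klDiv μ ρ := by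
  rw [klDiv, ← llr_def]
  by_cases h : μ ≪ ρ ∧ Integrable (llr μ ρ) μ
  · rw [if_pos h, InformationTheory.klDiv_of_ac_of_integrable h.1 h.2]
    simp
  · rw [if_neg h, eq_comm, ← not_ne_iff, InformationTheory.klDiv_ne_top_iff]
    exact h

end KLDiv

section Tilted

variable {X O : Type*} [MeasurableSpace X] [MeasurableSpace O] {o : X → O}

lemma map_withDensity_comp (μ : Measure X) (ho : Measurable o) {g : O → ℝ≥0∞}
    (hg : Measurable g) :
    (μ.withDensity (fun x => g (o x))).map o = (μ.map o).withDensity g := by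
  ext s hs
  rw [Measure.map_apply ho hs, withDensity_apply _ (ho hs), withDensity_apply _ hs,
    setLIntegral_map hs hg ho]

variable {μbase ν : Measure X} [IsFiniteMeasure μbase]

lemma map_tilted [IsFiniteMeasure ν] (ho : Measurable o) (hac : ν.map o ≪ μbase.map o) :
    (tilted o μbase ν).map o = ν.map o := by
  rw [tilted, map_withDensity_comp μbase ho (Measure.measurable_rnDeriv _ _),
    Measure.withDensity_rnDeriv_eq _ _ hac]

lemma rnDeriv_tilted (ho : Measurable o) :
    (tilted o μbase ν).rnDeriv μbase =ᵐ[μbase]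
      fun x => (ν.map o).rnDeriv (μbase.map o) (o x) :=
  Measure.rnDeriv_withDensity μbase ((Measure.measurable_rnDeriv _ _).comp ho)

lemma isFiniteMeasure_tilted [IsFiniteMeasure ν] (ho : Measurable o)
    (hac : ν.map o ≪ μbase.map o) : IsFiniteMeasure (tilted o μbase ν) := by
  have : IsFiniteMeasure ((tilted o μbase ν).map o) := by
    rw [map_tilted ho hac]
    infer_instance
  exact Measure.isFiniteMeasure_of_map ho.aemeasurable

lemma isProbabilityMeasure_tilted [IsProbabilityMeasure ν] (ho : Measurable o)
    (hac : ν.map o ≪ μbase.map o) : IsProbabilityMeasure (tilted o μbase ν) := by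
  have : IsProbabilityMeasure ((tilted o μbase ν).map o) := by
    rw [map_tilted ho hac]
    exact Measure.isProbabilityMeasure_map ho.aemeasurable
  exact Measure.isProbabilityMeasure_of_map o

lemma informationTheory_klDiv_tilted [IsFiniteMeasure ν] (ho : Measurable o)
    (hac : ν.map o ≪ μbase.map o) :
    InformationTheory.klDiv (tilted o μbase ν) μbase =
      InformationTheory.klDiv (ν.map o) (μbase.map o) := by
  have := isFiniteMeasure_tilted ho hac
  rw [InformationTheory.klDiv_eq_lintegral_klFun_of_ac (μ := tilted o μbase ν)
      (withDensity_absolutelyContinuous _ _),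
    InformationTheory.klDiv_eq_lintegral_klFun_of_ac hac, lintegral_map (by fun_prop) ho]
  refine lintegral_congr_ae ?_
  filter_upwards [rnDeriv_tilted ho] with x hx
  rw [hx]

end Tilted

theorem tilted_measure_minimizes_klDiv_general
    {X O : Type*} [MeasurableSpace X]
    [MeasurableSpace O]
    (o : X → O) (ho : Measurable o)
    (μbase ν : Measure X) [IsProbabilityMeasure μbase] [IsProbabilityMeasure ν]
    (hKL : klDiv (ν.map o) (μbase.map o) < ⊤) :
    (∀ μ : Measure X, IsProbabilityMeasure μ → μ.map o = ν.map o →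
      klDiv (ν.map o) (μbase.map o) ≤ klDiv μ μbase) ∧
    klDiv (tilted o μbase ν) μbase = klDiv (ν.map o) (μbase.map o) ∧
    (∀ μ : Measure X, IsProbabilityMeasure μ → μ.map o = ν.map o →
      klDiv (tilted o μbase ν) μbase ≤ klDiv μ μbase) := by
  have := Measure.isProbabilityMeasure_map (μ := ν) ho.aemeasurable
  have := Measure.isProbabilityMeasure_map (μ := μbase) ho.aemeasurable
  have hac := absolutelyContinuous_of_klDiv_lt_top hKL
  have := isProbabilityMeasure_tilted (μbase := μbase) ho hac
  have hlower : ∀ μ : Measure X, IsProbabilityMeasure μ → μ.map o = ν.map o →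
      klDiv (ν.map o) (μbase.map o) ≤ klDiv μ μbase := by
    intro μ _ hμ
    rw [klDiv_eq_informationTheory_klDiv, klDiv_eq_informationTheory_klDiv, ← hμ]
    exact InformationTheory.klDiv_map_le μ μbase ho
  have hattained : klDiv (tilted o μbase ν) μbase = klDiv (ν.map o) (μbase.map o) := by
    rw [klDiv_eq_informationTheory_klDiv, klDiv_eq_informationTheory_klDiv,
      informationTheory_klDiv_tilted ho hac]
  exact ⟨hlower, hattained, fun μ hμ hmap => hattained ▸ hlower μ hμ hmap⟩

/-- **The tilted measure is the information projection.** Let `X`, `O` be standard Borel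
spaces, `o : X → O` measurable, and `μ_base`, `ν` Borel probability measures on `X` with
`o_#ν ≪ o_#μ_base` and `D_KL(o_#ν‖o_#μ_base) < ∞`. Then: (1) every Borel probability
measure `μ` with `o_#μ = o_#ν` satisfies `D_KL(μ‖μ_base) ≥ D_KL(o_#ν‖o_#μ_base)`;
(2) the tilted measure `μ*` attains this bound: `D_KL(μ*‖μ_base) = D_KL(o_#ν‖o_#μ_base)`;
hence `μ*` minimizes `D_KL(·‖μ_base)` over `{μ : o_#μ = o_#ν}`. -/
theorem tilted_measure_minimizes_klDiv
    {X O : Type*} [MeasurableSpace X] [StandardBorelSpace X]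
    [MeasurableSpace O] [StandardBorelSpace O]
    (o : X → O) (ho : Measurable o)
    (μbase ν : Measure X) [IsProbabilityMeasure μbase] [IsProbabilityMeasure ν]
    (hac : ν.map o ≪ μbase.map o)
    (hKL : klDiv (ν.map o) (μbase.map o) < ⊤) :
    (∀ μ : Measure X, IsProbabilityMeasure μ → μ.map o = ν.map o →
      klDiv (ν.map o) (μbase.map o) ≤ klDiv μ μbase) ∧
    klDiv (tilted o μbase ν) μbase = klDiv (ν.map o) (μbase.map o) ∧
    (∀ μ : Measure X, IsProbabilityMeasure μ → μ.map o = ν.map o →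
      klDiv (tilted o μbase ν) μbase ≤ klDiv μ μbase) :=
  tilted_measure_minimizes_klDiv_general o ho μbase ν hKL
end

section
/- Let ρ be a probability measure on a measurable space, and let μ₀ ≠ μ₁ be probability measures on the same space with D_KL(μ₀‖ρ) < ∞ and D_KL(μ₁‖ρ) < ∞. Then for every t ∈ (0, 1), the map μ ↦ D_KL(μ‖ρ) is strictly convex along the segment: D_KL(t·μ₀ + (1−t)·μ₁ ‖ ρ) < t·D_KL(μ₀‖ρ) + (1−t)·D_KL(μ₁‖ρ). -/
/-!
Write `f = dμ/dρ`. For measures of equal total mass, `D_KL(μ‖ρ)` is the Lebesgue integral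
`∫⁻ klFun (f) dρ` of the nonnegative, strictly convex function `klFun x = x log x + 1 - x`, and
the density of a mixture is the mixture of the densities. Strict convexity of `klFun` thus gives
a pointwise inequality between the integrands which is strict wherever the densities of `μ₀` and
`μ₁` differ; since `μ₀ ≠ μ₁` that happens on a set of positive `ρ`-measure, and the strict
inequality survives integration because the right-hand side is finite.
-/

open MeasureTheory
open scoped ENNReal Classical

open InformationTheory (klFun klFun_nonneg strictConvexOn_klFun convexOn_klFun)

section

variable {X : Type*} [MeasurableSpace X] {μ ν ρ : Measure X}

lemma absolutelyContinuous_of_klDiv_ne_top (h : klDiv μ ρ ≠ ⊤) : μ ≪ ρ := by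
  by_contra hac
  exact h (if_neg (not_and_of_not_left _ hac))

lemma klDiv_eq_informationTheory_klDiv_s8 [IsFiniteMeasure μ] [IsFiniteMeasure ρ]
    (h : μ Set.univ = ρ Set.univ) : klDiv μ ρ = InformationTheory.klDiv μ ρ := by
  rw [klDiv, InformationTheory.klDiv_def]
  simp [llr_def, measureReal_def, h]

lemma klDiv_eq_lintegral_klFun_of_ac [IsFiniteMeasure μ] [IsFiniteMeasure ρ]
    (h : μ Set.univ = ρ Set.univ) (hac : μ ≪ ρ) :
    klDiv μ ρ = ∫⁻ x, ENNReal.ofReal (klFun (μ.rnDeriv ρ x).toReal) ∂ρ := by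
  rw [klDiv_eq_informationTheory_klDiv_s8 h, InformationTheory.klDiv_eq_lintegral_klFun_of_ac hac]

lemma isProbabilityMeasure_ofReal_smul_add_ofReal_smul [IsProbabilityMeasure μ]
    [IsProbabilityMeasure ν] {t : ℝ} (ht₀ : 0 ≤ t) (ht₁ : t ≤ 1) :
    IsProbabilityMeasure (ENNReal.ofReal t • μ + ENNReal.ofReal (1 - t) • ν) :=
  ⟨by simp [← ENNReal.ofReal_add ht₀ (sub_nonneg.2 ht₁)]⟩

lemma toReal_rnDeriv_ofReal_smul_add_ofReal_smul [IsFiniteMeasure μ] [IsFiniteMeasure ν]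
    [SigmaFinite ρ] {s t : ℝ} (hs : 0 ≤ s) (ht : 0 ≤ t) :
    ∀ᵐ x ∂ρ, ((ENNReal.ofReal s • μ + ENNReal.ofReal t • ν).rnDeriv ρ x).toReal
      = s * (μ.rnDeriv ρ x).toReal + t * (ν.rnDeriv ρ x).toReal := by
  -- `ENNReal.ofReal s` is `↑s.toNNReal`, and `ℝ≥0`-multiples of finite measures are finite.
  change ∀ᵐ x ∂ρ, ((s.toNNReal • μ + t.toNNReal • ν).rnDeriv ρ x).toReal = _
  filter_upwards [Measure.rnDeriv_add' (s.toNNReal • μ) (t.toNNReal • ν) ρ,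
    Measure.rnDeriv_smul_left' μ ρ s.toNNReal, Measure.rnDeriv_smul_left' ν ρ t.toNNReal,
    μ.rnDeriv_lt_top ρ, ν.rnDeriv_lt_top ρ] with x hadd hμ hν hμ_lt hν_lt
  rw [hadd, Pi.add_apply, hμ, hν, Pi.smul_apply, Pi.smul_apply]
  simp only [ENNReal.smul_def, smul_eq_mul]
  rw [ENNReal.toReal_add (by finiteness) (by finiteness)]
  simp [Real.coe_toNNReal _ hs, Real.coe_toNNReal _ ht]

lemma klDiv_ofReal_smul_add_ofReal_smul_eq_lintegral [IsProbabilityMeasure μ]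
    [IsProbabilityMeasure ν] [IsProbabilityMeasure ρ] (hμ : μ ≪ ρ) (hν : ν ≪ ρ) {t : ℝ}
    (ht₀ : 0 ≤ t) (ht₁ : t ≤ 1) :
    klDiv (ENNReal.ofReal t • μ + ENNReal.ofReal (1 - t) • ν) ρ
      = ∫⁻ x, ENNReal.ofReal
          (klFun (t * (μ.rnDeriv ρ x).toReal + (1 - t) * (ν.rnDeriv ρ x).toReal)) ∂ρ := by
  have := isProbabilityMeasure_ofReal_smul_add_ofReal_smul (μ := μ) (ν := ν) ht₀ ht₁
  rw [klDiv_eq_lintegral_klFun_of_ac (by simp) ((hμ.smul_left _).add_left (hν.smul_left _))]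
  refine lintegral_congr_ae ?_
  filter_upwards [toReal_rnDeriv_ofReal_smul_add_ofReal_smul (μ := μ) (ν := ν) (ρ := ρ)
    ht₀ (sub_nonneg.2 ht₁)] with x hx
  rw [hx]

lemma frequently_toReal_rnDeriv_ne_of_ne [SigmaFinite μ] [SigmaFinite ν] [SigmaFinite ρ]
    (hμ : μ ≪ ρ) (hν : ν ≪ ρ) (hne : μ ≠ ν) :
    ∃ᵐ x ∂ρ, (μ.rnDeriv ρ x).toReal ≠ (ν.rnDeriv ρ x).toReal := by
  refine fun h_eq => hne ?_
  rw [← Measure.withDensity_rnDeriv_eq μ ρ hμ, ← Measure.withDensity_rnDeriv_eq ν ρ hν]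
  refine withDensity_congr_ae ?_
  filter_upwards [h_eq, μ.rnDeriv_lt_top ρ, ν.rnDeriv_lt_top ρ] with x hx hμ_lt hν_lt
  exact (ENNReal.toReal_eq_toReal_iff' hμ_lt.ne hν_lt.ne).1 (not_not.1 hx)

end

lemma ofReal_klFun_convexComb_le {a b t : ℝ} (ha : 0 ≤ a) (hb : 0 ≤ b) (ht₀ : 0 ≤ t)
    (ht₁ : t ≤ 1) :
    ENNReal.ofReal (klFun (t * a + (1 - t) * b))
      ≤ ENNReal.ofReal t * ENNReal.ofReal (klFun a)
        + ENNReal.ofReal (1 - t) * ENNReal.ofReal (klFun b) := by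
  rw [← ENNReal.ofReal_mul ht₀, ← ENNReal.ofReal_mul (sub_nonneg.2 ht₁)]
  refine ENNReal.ofReal_le_ofReal ?_ |>.trans ENNReal.ofReal_add_le
  simpa using convexOn_klFun.2 ha hb ht₀ (sub_nonneg.2 ht₁) (by ring)

lemma ofReal_klFun_convexComb_lt {a b t : ℝ} (ha : 0 ≤ a) (hb : 0 ≤ b) (hab : a ≠ b)
    (ht₀ : 0 < t) (ht₁ : t < 1) :
    ENNReal.ofReal (klFun (t * a + (1 - t) * b))
      < ENNReal.ofReal t * ENNReal.ofReal (klFun a)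
        + ENNReal.ofReal (1 - t) * ENNReal.ofReal (klFun b) := by
  have hs : 0 < 1 - t := sub_pos.2 ht₁
  have hlt := strictConvexOn_klFun.2 ha hb hab ht₀ hs (by ring)
  simp only [smul_eq_mul] at hlt
  rw [← ENNReal.ofReal_mul ht₀.le, ← ENNReal.ofReal_mul hs.le,
    ← ENNReal.ofReal_add (by positivity [klFun_nonneg ha]) (by positivity [klFun_nonneg hb])]
  exact (ENNReal.ofReal_lt_ofReal_iff_of_nonneg (klFun_nonneg (by positivity))).2 hlt

/-- **Strict convexity of the KL divergence.** Let `ρ` be a probability measure and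
`μ₀ ≠ μ₁` probability measures on the same space with `D_KL(μ₀‖ρ) < ∞` and
`D_KL(μ₁‖ρ) < ∞`. Then for every `t ∈ (0, 1)`,
`D_KL(t·μ₀ + (1-t)·μ₁ ‖ ρ) < t·D_KL(μ₀‖ρ) + (1-t)·D_KL(μ₁‖ρ)`. -/
theorem klDiv_strictly_convex
    {X : Type*} [MeasurableSpace X]
    (ρ μ₀ μ₁ : Measure X) [IsProbabilityMeasure ρ]
    [IsProbabilityMeasure μ₀] [IsProbabilityMeasure μ₁]
    (hne : μ₀ ≠ μ₁) (h₀ : klDiv μ₀ ρ < ⊤) (h₁ : klDiv μ₁ ρ < ⊤)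
    (t : ℝ) (ht : t ∈ Set.Ioo (0 : ℝ) 1) :
    klDiv (ENNReal.ofReal t • μ₀ + ENNReal.ofReal (1 - t) • μ₁) ρ
      < ENNReal.ofReal t * klDiv μ₀ ρ + ENNReal.ofReal (1 - t) * klDiv μ₁ ρ := by
  obtain ⟨ht₀, ht₁⟩ := ht
  have hac₀ := absolutelyContinuous_of_klDiv_ne_top h₀.ne
  have hac₁ := absolutelyContinuous_of_klDiv_ne_top h₁.ne
  set f₀ := fun x => (μ₀.rnDeriv ρ x).toReal
  set f₁ := fun x => (μ₁.rnDeriv ρ x).toReal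
  have h_rhs : ENNReal.ofReal t * klDiv μ₀ ρ + ENNReal.ofReal (1 - t) * klDiv μ₁ ρ
      = ∫⁻ x, ENNReal.ofReal t * ENNReal.ofReal (klFun (f₀ x))
          + ENNReal.ofReal (1 - t) * ENNReal.ofReal (klFun (f₁ x)) ∂ρ := by
    rw [klDiv_eq_lintegral_klFun_of_ac (by simp) hac₀,
      klDiv_eq_lintegral_klFun_of_ac (by simp) hac₁, ← lintegral_const_mul' _ _ ENNReal.ofReal_ne_top,
      ← lintegral_const_mul' _ _ ENNReal.ofReal_ne_top, ← lintegral_add_left (by fun_prop)]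
  have h_fin : ENNReal.ofReal t * klDiv μ₀ ρ + ENNReal.ofReal (1 - t) * klDiv μ₁ ρ ≠ ⊤ := by
    finiteness
  have h_le x := ofReal_klFun_convexComb_le (ENNReal.toReal_nonneg (a := μ₀.rnDeriv ρ x))
    (ENNReal.toReal_nonneg (a := μ₁.rnDeriv ρ x)) ht₀.le ht₁.le
  rw [h_rhs] at h_fin
  rw [klDiv_ofReal_smul_add_ofReal_smul_eq_lintegral hac₀ hac₁ ht₀.le ht₁.le, h_rhs]
  refine lintegral_strict_mono_of_ae_le_of_frequently_ae_lt (by fun_prop)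
    (ne_top_of_le_ne_top h_fin (lintegral_mono h_le)) (ae_of_all _ h_le) ?_
  refine (frequently_toReal_rnDeriv_ne_of_ne hac₀ hac₁ hne).mono fun x hx => ?_
  exact (ofReal_klFun_convexComb_lt ENNReal.toReal_nonneg ENNReal.toReal_nonneg hx ht₀ ht₁).ne
end

section
/- Let O be a nonempty compact metric space and let μ, ν be Borel probability measures on O. Then the supremum defining the Wasserstein-type distance is attained: there exists a 1-Lipschitz function f* : O → ℝ such that ∫ f* dμ − ∫ f* dν = sup over all 1-Lipschitz f : O → ℝ of (∫ f dμ − ∫ f dν). -/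
/-!
Since `μ` and `ν` both have mass one, the objective `∫ f dμ - ∫ f dν` does not change when a
constant is added to `f`, so it suffices to maximize over 1-Lipschitz functions vanishing at a
base point. By Arzelà–Ascoli these form a compact subset of `O →ᵇ ℝ`, on which the objective is
continuous (each integral is 1-Lipschitz for the sup norm), so a maximizer exists.
-/

open MeasureTheory BoundedContinuousFunction NNReal

theorem BoundedContinuousFunction.isCompact_setOf_lipschitzWith_apply_eq_zero
    {α : Type*} [PseudoMetricSpace α] [CompactSpace α] (K : ℝ≥0) (x₀ : α) :
    IsCompact {f : α →ᵇ ℝ | LipschitzWith K f ∧ f x₀ = 0} := by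
  refine arzela_ascoli₂ (Metric.closedBall 0 (K * Metric.diam (Set.univ : Set α)))
    (isCompact_closedBall _ _) _ ?_ ?_ ?_
  · have hLip : IsClosed {f : α →ᵇ ℝ | LipschitzWith K f} :=
      (isClosed_setOfPred_lipschitzWith (α := α) (β := ℝ) K).preimage continuous_coe
    exact hLip.inter (isClosed_eq (continuous_eval_const x₀) continuous_const)
  · rintro f x ⟨hf, hf₀⟩
    rw [Metric.mem_closedBall, ← hf₀]
    calc dist (f x) (f x₀) ≤ K * dist x x₀ := hf.dist_le_mul x x₀
      _ ≤ K * Metric.diam (Set.univ : Set α) := by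
        gcongr
        exact Metric.dist_le_diam_of_mem isCompact_univ.isBounded trivial trivial
  · exact (LipschitzWith.uniformEquicontinuous _ K fun f => f.2.1).equicontinuous

theorem BoundedContinuousFunction.lipschitzWith_integral {X E : Type*} [TopologicalSpace X]
    [MeasurableSpace X] [OpensMeasurableSpace X] [NormedAddCommGroup E] [NormedSpace ℝ E]
    [SecondCountableTopology E] [MeasurableSpace E] [BorelSpace E]
    (μ : Measure X) [IsProbabilityMeasure μ] :
    LipschitzWith 1 fun f : X →ᵇ E => ∫ x, f x ∂μ := by
  refine LipschitzWith.of_dist_le_mul fun f g => ?_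
  rw [dist_eq_norm, ← integral_sub (f.integrable μ) (g.integrable μ), NNReal.coe_one, one_mul,
    dist_eq_norm]
  exact (f - g).norm_integral_le_norm μ

theorem MeasureTheory.integral_sub_const_of_isProbabilityMeasure {α : Type*} [MeasurableSpace α]
    {μ : Measure α} [IsProbabilityMeasure μ] {f : α → ℝ} (hf : Integrable f μ) (c : ℝ) :
    ∫ x, (f x - c) ∂μ = ∫ x, f x ∂μ - c := by
  simp [integral_sub hf (integrable_const c)]

/-- **Attainment of the Wasserstein-type supremum.** Let `O` be a nonempty compact metric
space and `μ`, `ν` Borel probability measures on `O`. Then there exists a 1-Lipschitz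
function `f* : O → ℝ` such that
`∫ f* dμ - ∫ f* dν = sup { ∫ f dμ - ∫ f dν : f 1-Lipschitz }`. -/
theorem lipschitz_sup_attained
    {O : Type*} [MetricSpace O] [CompactSpace O] [Nonempty O]
    [MeasurableSpace O] [BorelSpace O]
    (μ ν : Measure O) [IsProbabilityMeasure μ] [IsProbabilityMeasure ν] :
    ∃ fstar : O → ℝ, LipschitzWith 1 fstar ∧
      ∫ x, fstar x ∂μ - ∫ x, fstar x ∂ν =
        sSup {r : ℝ | ∃ f : O → ℝ, LipschitzWith 1 f ∧
          r = ∫ x, f x ∂μ - ∫ x, f x ∂ν} := by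
  obtain ⟨x₀⟩ := ‹Nonempty O›
  let Φ (f : O →ᵇ ℝ) : ℝ := ∫ x, f x ∂μ - ∫ x, f x ∂ν
  have hΦ : Continuous Φ :=
    (lipschitzWith_integral μ).continuous.sub (lipschitzWith_integral ν).continuous
  obtain ⟨g, ⟨hg, -⟩, hg_max⟩ := (isCompact_setOf_lipschitzWith_apply_eq_zero 1 x₀).exists_isMaxOn
    ⟨0, LipschitzWith.const' 0, rfl⟩ hΦ.continuousOn
  refine ⟨g, hg, Eq.symm <| IsGreatest.csSup_eq ⟨⟨g, hg, rfl⟩, ?_⟩⟩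
  rintro _ ⟨f, hf, rfl⟩
  let F : O →ᵇ ℝ := mkOfCompact ⟨fun x => f x - f x₀, hf.continuous.sub continuous_const⟩
  have hF : LipschitzWith 1 F := ((IsometryEquiv.subRight (f x₀)).isometry.lipschitzWith_iff 1).2 hf
  have hf_int (m : Measure O) [IsProbabilityMeasure m] : Integrable f m :=
    (mkOfCompact ⟨f, hf.continuous⟩).integrable m
  calc ∫ x, f x ∂μ - ∫ x, f x ∂ν = Φ F := by
        simp [Φ, F, integral_sub_const_of_isProbabilityMeasure (hf_int _)]
    _ ≤ Φ g := hg_max ⟨hF, sub_self _⟩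
end
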